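/- arXiv:2212.07124 — 3 statements merged into one kernel-verified Lean document; each statement's English description precedes it below -/
import Mathlib

section
/- The discrete Fréchet distance between a curve P and its μ-simplification P^μ is at most μ. -/
/-! Match every vertex `p_i` with the last simplification vertex `p_a` with `a ≤ i`. The index
of `a` in the simplification grows by at most one per step, so this matching is a monotone
walk. If `a < i`, the next simplification vertex comes after `i`, so the greedy rule gives
`ℓ(P[a, i]) ≤ μ`, and `d(p_a, p_i) ≤ ℓ(P[a, i])` by the triangle inequality. -/

open scoped BigOperators

namespace Frechet

variable {X : Type*}

/-- A single step of a monotone discrete walk: each coordinate increases by 0 or 1,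
and not both stay the same. -/
def IsStep (a b : ℕ × ℕ) : Prop :=
  (b.1 = a.1 ∨ b.1 = a.1 + 1) ∧ (b.2 = a.2 ∨ b.2 = a.2 + 1) ∧ b ≠ a

/-- A monotone discrete walk from (0,0) to (n-1, m-1) in the n × m lattice
(0-indexed version of a walk from (1,1) to (n,m)). -/
def IsWalk (n m : ℕ) (F : List (ℕ × ℕ)) : Prop :=
  F ≠ [] ∧ F.head? = some (0, 0) ∧ F.getLast? = some (n - 1, m - 1) ∧
    F.Chain' IsStep ∧ ∀ p ∈ F, p.1 < n ∧ p.2 < m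

/-- Cost of a walk: the maximum matched distance along it. -/
def walkCost (d : X → X → ℝ) (P Q : ℕ → X) (F : List (ℕ × ℕ)) : ℝ :=
  (F.map fun p => d (P p.1) (Q p.2)).foldr max 0

/-- Discrete Fréchet distance between `P` (first `n` points) and `Q` (first `m` points),
computed with respect to the distance-like function `d`. -/
noncomputable def dF (d : X → X → ℝ) (P : ℕ → X) (n : ℕ) (Q : ℕ → X) (m : ℕ) : ℝ :=
  sInf {c | ∃ F, IsWalk n m F ∧ walkCost d P Q F = c}

/-- Arc length of the polygonal curve `P` between vertex indices `i` and `j`. -/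
def arcLen (d : X → X → ℝ) (P : ℕ → X) (i j : ℕ) : ℝ :=
  ∑ k ∈ Finset.Ico i j, d (P k) (P (k + 1))

/-- `S` is the list of indices of the greedy `μ`-simplification of the curve
`P` with `n` vertices: it starts at vertex `0`, after a vertex `a` the next chosen
vertex `b` is the first one with arc length `> μ` (unless `b` is the final vertex
`n-1`, which is always appended), and it ends at vertex `n-1`. -/
def IsSimplification (d : X → X → ℝ) (P : ℕ → X) (n : ℕ) (μ : ℝ) (S : List ℕ) : Prop :=
  S.head? = some 0 ∧ S.getLast? = some (n - 1) ∧ S.Pairwise (· < ·) ∧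
    (∀ a ∈ S, a < n) ∧
    S.Chain' (fun a b =>
      (∀ j, a < j → j < b → arcLen d P a j ≤ μ) ∧ (b = n - 1 ∨ μ < arcLen d P a b))

/-- The subsequence of `P` selected by the index list `S`, as a curve. -/
def subCurve (P : ℕ → X) (S : List ℕ) : ℕ → X :=
  fun t => P (S.getD t 0)

/-- Discrete c-packedness of the polygonal curve `P` (first `n` vertices): for every
ball, the total length of the edges of `P` contained in the ball is at most `c`
times the radius. -/
def CPacked (d : X → X → ℝ) (P : ℕ → X) (n : ℕ) (c : ℝ) : Prop :=
  ∀ (x : X) (r : ℝ), 0 ≤ r →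
    ∑ k ∈ Finset.range (n - 1),
      (if d (P k) x ≤ r ∧ d (P (k + 1)) x ≤ r then d (P k) (P (k + 1)) else 0) ≤ c * r

/-- Directed discrete Hausdorff distance from `P` (first `n` points) to `Q`
(first `m` points). -/
noncomputable def dirHaus (d : X → X → ℝ) (P : ℕ → X) (n : ℕ) (Q : ℕ → X) (m : ℕ) : ℝ :=
  sSup {r | ∃ i < n, r = sInf {s | ∃ j < m, s = d (P i) (Q j)}}

/-- Discrete (symmetric) Hausdorff distance. -/
noncomputable def dHaus (d : X → X → ℝ) (P : ℕ → X) (n : ℕ) (Q : ℕ → X) (m : ℕ) : ℝ :=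
  max (dirHaus d P n Q m) (dirHaus d Q m P n)

section Walks

variable {d : X → X → ℝ} {P Q : ℕ → X} {n m : ℕ}

lemma walkCost_nonneg (F : List (ℕ × ℕ)) : 0 ≤ walkCost d P Q F := by
  unfold walkCost
  induction F with
  | nil => rfl
  | cons _ _ ih => exact ih.trans (le_max_right _ _)

lemma walkCost_le {F : List (ℕ × ℕ)} {μ : ℝ} (hμ : 0 ≤ μ)
    (h : ∀ p ∈ F, d (P p.1) (Q p.2) ≤ μ) : walkCost d P Q F ≤ μ := by
  unfold walkCost
  induction F with
  | nil => exact hμ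
  | cons p F ih =>
    simp only [List.forall_mem_cons] at h
    exact max_le h.1 (ih h.2)

lemma dF_le_walkCost {F : List (ℕ × ℕ)} (hF : IsWalk n m F) :
    dF d P n Q m ≤ walkCost d P Q F :=
  csInf_le ⟨0, by rintro _ ⟨F', -, rfl⟩; exact walkCost_nonneg F'⟩ ⟨F, hF, rfl⟩

lemma isWalk_graph {σ : ℕ → ℕ} (hn : 0 < n) (h0 : σ 0 = 0) (hlast : σ (n - 1) = m - 1)
    (hstep : ∀ i < n - 1, σ (i + 1) = σ i ∨ σ (i + 1) = σ i + 1) (hlt : ∀ i < n, σ i < m) :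
    IsWalk n m ((List.range n).map fun i => (i, σ i)) := by
  refine ⟨by simpa using hn.ne', ?_, ?_, ?_, ?_⟩
  · simp [List.head?_range, hn.ne', h0]
  · simp [List.getLast?_range, hn.ne', hlast]
  · show List.IsChain _ _
    rw [List.isChain_map, List.isChain_range]
    exact fun i hi => ⟨Or.inr rfl, hstep i hi, by simp⟩
  · simpa using fun i hi => ⟨hi, hlt i hi⟩

lemma dF_le_of_forall_dist_le {σ : ℕ → ℕ} {μ : ℝ} (hμ : 0 ≤ μ) (hn : 0 < n) (h0 : σ 0 = 0)
    (hlast : σ (n - 1) = m - 1)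
    (hstep : ∀ i < n - 1, σ (i + 1) = σ i ∨ σ (i + 1) = σ i + 1) (hlt : ∀ i < n, σ i < m)
    (hdist : ∀ i < n, d (P i) (Q (σ i)) ≤ μ) : dF d P n Q m ≤ μ :=
  (dF_le_walkCost (isWalk_graph hn h0 hlast hstep hlt)).trans <|
    walkCost_le hμ <| by simpa using hdist

end Walks

section LastIndex

variable {s : ℕ → ℕ} {N : ℕ}

/-- For the index sequence `s` of a simplification, the position of the last simplification
vertex at or before vertex `i`. -/
def lastLE (s : ℕ → ℕ) (N i : ℕ) : ℕ :=
  Nat.findGreatest (fun k => s k ≤ i) N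

lemma lastLE_le (i : ℕ) : lastLE s N i ≤ N :=
  Nat.findGreatest_le N

lemma apply_lastLE_le (h0 : s 0 = 0) (i : ℕ) : s (lastLE s N i) ≤ i :=
  Nat.findGreatest_spec (P := fun k => s k ≤ i) (Nat.zero_le N) (by simp [h0])

lemma lt_apply_lastLE_succ {i : ℕ} (h : lastLE s N i < N) : i < s (lastLE s N i + 1) :=
  not_le.mp <| Nat.findGreatest_is_greatest (P := fun k => s k ≤ i) (Nat.lt_succ_self _) h

lemma lastLE_zero (hs : StrictMonoOn s (Set.Iic N)) (h0 : s 0 = 0) : lastLE s N 0 = 0 :=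
  Nat.findGreatest_eq_zero_iff.mpr fun _ hk hkN =>
    not_le.mpr (h0 ▸ hs (Nat.zero_le N) hkN hk)

lemma lastLE_of_apply_le {i : ℕ} (h : s N ≤ i) : lastLE s N i = N :=
  Nat.findGreatest_eq h

lemma lastLE_succ (hs : StrictMonoOn s (Set.Iic N)) (h0 : s 0 = 0) (i : ℕ) :
    lastLE s N (i + 1) = lastLE s N i ∨ lastLE s N (i + 1) = lastLE s N i + 1 := by
  have hmono : lastLE s N i ≤ lastLE s N (i + 1) :=
    Nat.findGreatest_mono_left (fun _ h => h.trans i.le_succ) N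
  suffices lastLE s N (i + 1) ≤ lastLE s N i + 1 by omega
  by_contra! hgt
  have hiN : lastLE s N i < N := by have := lastLE_le (s := s) (N := N) (i + 1); omega
  have hnext : s (lastLE s N i + 1) < s (lastLE s N (i + 1)) :=
    hs (Set.mem_Iic.mpr hiN) (lastLE_le _) hgt
  have := lt_apply_lastLE_succ hiN
  have := apply_lastLE_le (N := N) h0 (i + 1)
  omega

end LastIndex

section Simplification

variable [PseudoMetricSpace X] {P : ℕ → X} {n : ℕ} {μ : ℝ} {S : List ℕ}

lemma _root_.List.Pairwise.strictMonoOn_getD {α : Type*} [Preorder α] {S : List α} {a : α}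
    (hS : S.Pairwise (· < ·)) (hne : S ≠ []) :
    StrictMonoOn (S.getD · a) (Set.Iic (S.length - 1)) := by
  intro k _ l hl hkl
  have hl : l < S.length := by
    have := List.length_pos_iff.mpr hne
    have := Set.mem_Iic.mp hl
    omega
  simp only [List.getD_eq_getElem _ _ hl, List.getD_eq_getElem _ _ (hkl.trans hl)]
  exact hS.sortedLT.strictMono_get (a := ⟨k, hkl.trans hl⟩) (b := ⟨l, hl⟩) hkl

namespace IsSimplification

variable (hS : IsSimplification dist P n μ S)
include hS

lemma ne_nil : S ≠ [] := by
  rintro rfl; simp [IsSimplification] at hS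

lemma getD_zero : S.getD 0 0 = 0 := by
  simp [List.getD_eq_getElem?_getD, ← List.head?_eq_getElem?, hS.1]

lemma getD_length_sub_one : S.getD (S.length - 1) 0 = n - 1 := by
  simp [List.getD_eq_getElem?_getD, ← List.getLast?_eq_getElem?, hS.2.1]

lemma pos : 0 < n :=
  hS.2.2.2.1 _ (List.mem_of_mem_head? hS.1)

lemma strictMonoOn_getD : StrictMonoOn (S.getD · 0) (Set.Iic (S.length - 1)) :=
  hS.2.2.1.strictMonoOn_getD hS.ne_nil

lemma arcLen_le {k j : ℕ} (hk : k + 1 < S.length) (hkj : S.getD k 0 < j)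
    (hjk : j < S.getD (k + 1) 0) : arcLen dist P (S.getD k 0) j ≤ μ := by
  have := List.isChain_iff_getElem.mp hS.2.2.2.2 k hk
  simp only [List.getD_eq_getElem _ _ hk, List.getD_eq_getElem _ _ (k.lt_succ_self.trans hk)]
    at hkj hjk ⊢
  exact this.1 j hkj hjk

lemma dist_le_lastLE (hμ : 0 ≤ μ) {i : ℕ} (hi : i < n) :
    dist (P i) (subCurve P S (lastLE (S.getD · 0) (S.length - 1) i)) ≤ μ := by
  set k := lastLE (S.getD · 0) (S.length - 1) i
  have hki : S.getD k 0 ≤ i := apply_lastLE_le (s := (S.getD · 0)) hS.getD_zero i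
  rcases hki.eq_or_lt with heq | hlt
  · rwa [subCurve, heq, dist_self]
  have hkN : k < S.length - 1 := by
    refine (lastLE_le i).lt_of_ne fun hkN => ?_
    have := hS.getD_length_sub_one
    rw [show k = S.length - 1 from hkN] at hlt
    omega
  calc dist (P i) (P (S.getD k 0)) = dist (P (S.getD k 0)) (P i) := dist_comm _ _
    _ ≤ arcLen dist P (S.getD k 0) i := dist_le_Ico_sum_dist P hlt.le
    _ ≤ μ := hS.arcLen_le (by omega) hlt (lt_apply_lastLE_succ hkN)

end IsSimplification

end Simplification

theorem dF_simplification_le_general {X : Type*} [MetricSpace X]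
    (P : ℕ → X) (n : ℕ) (μ : ℝ) (hμ : 0 ≤ μ)
    (S : List ℕ) (hS : IsSimplification dist P n μ S) :
    dF dist P n (subCurve P S) S.length ≤ μ := by
  have hL : 0 < S.length := List.length_pos_iff.mpr hS.ne_nil
  exact dF_le_of_forall_dist_le (σ := lastLE (S.getD · 0) (S.length - 1)) hμ hS.pos
    (lastLE_zero (s := (S.getD · 0)) hS.strictMonoOn_getD hS.getD_zero)
    (lastLE_of_apply_le hS.getD_length_sub_one.le)
    (fun i _ => lastLE_succ (s := (S.getD · 0)) hS.strictMonoOn_getD hS.getD_zero i)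
    (fun i _ => (lastLE_le i).trans_lt (by omega))
    (fun i hi => hS.dist_le_lastLE hμ hi)

/-- the discrete Fréchet distance between a curve and its greedy
`μ`-simplification is at most `μ`. -/
theorem dF_simplification_le {X : Type*} [MetricSpace X]
    (P : ℕ → X) (n : ℕ) (hn : 0 < n) (μ : ℝ) (hμ : 0 ≤ μ)
    (S : List ℕ) (hS : IsSimplification dist P n μ S) :
    dF dist P n (subCurve P S) S.length ≤ μ :=
  dF_simplification_le_general P n μ hμ S hS

end Frechet
end

section
/- Any κ-straight curve is 8κ-packed: if P satisfies ℓ(P[i,j]) ≤ κ·d(p_i, p_j) for all vertex indices i < j, then for every ball B of radius r, ℓ(P ∩ B) ≤ 8κ·r, where P ∩ B denotes the maximal subcurves of P contained in B. -/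
open scoped BigOperators

namespace Frechet

variable {X : Type*}

theorem _root_.Finset.subset_Ico_min'_max'_succ (S : Finset ℕ) (hS : S.Nonempty) :
    S ⊆ Finset.Ico (S.min' hS) (S.max' hS + 1) := fun k hk =>
  Finset.mem_Ico.mpr ⟨S.min'_le k hk, Nat.lt_succ_of_le (S.le_max' k hk)⟩

section Straight

variable [PseudoMetricSpace X] {P : ℕ → X} {n : ℕ} {κ : ℝ}

theorem sum_dist_le_arcLen_of_subset {S : Finset ℕ} {i j : ℕ} (h : S ⊆ Finset.Ico i j) :
    ∑ k ∈ S, dist (P k) (P (k + 1)) ≤ arcLen dist P i j :=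
  Finset.sum_le_sum_of_subset_of_nonneg h fun _ _ _ => dist_nonneg

/-- Any family of edges of a `κ`-straight curve lying in a ball of radius `r` sits inside the
stretch of the curve from its first to its last edge, whose endpoints are at most `2r` apart. -/
theorem sum_dist_le_of_straight (hκ : 0 ≤ κ)
    (hstraight : ∀ i j, i ≤ j → j < n → arcLen dist P i j ≤ κ * dist (P i) (P j))
    {x : X} {r : ℝ} (hr : 0 ≤ r) {S : Finset ℕ}
    (hS : ∀ k ∈ S, k + 1 < n ∧ dist (P k) x ≤ r ∧ dist (P (k + 1)) x ≤ r) :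
    ∑ k ∈ S, dist (P k) (P (k + 1)) ≤ κ * (2 * r) := by
  rcases S.eq_empty_or_nonempty with rfl | hne
  · rw [Finset.sum_empty]
    positivity
  set i := S.min' hne
  set j := S.max' hne
  have hi := hS i (S.min'_mem hne)
  have hj := hS j (S.max'_mem hne)
  calc ∑ k ∈ S, dist (P k) (P (k + 1))
      ≤ arcLen dist P i (j + 1) :=
        sum_dist_le_arcLen_of_subset (S.subset_Ico_min'_max'_succ hne)
    _ ≤ κ * dist (P i) (P (j + 1)) :=
        hstraight _ _ (Nat.le_succ_of_le (S.min'_le j (S.max'_mem hne))) hj.1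
    _ ≤ κ * (2 * r) := by
        gcongr
        linarith [dist_triangle_right (P i) (P (j + 1)) x, hi.2.1, hj.2.2]

end Straight

/-- every `κ`-straight curve is `8κ`-packed: if the arc length between
any two vertices is at most `κ` times their distance, then for every ball of radius
`r` the length of `P` inside the ball is at most `8κ·r`. -/
theorem straight_implies_packed {X : Type*} [MetricSpace X]
    (P : ℕ → X) (n : ℕ) (κ : ℝ) (hκ : 0 ≤ κ)
    (hstraight : ∀ i j, i ≤ j → j < n → arcLen dist P i j ≤ κ * dist (P i) (P j)) :
    CPacked dist P n (8 * κ) := by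
  intro x r hr
  rw [← Finset.sum_filter]
  calc _ ≤ κ * (2 * r) := sum_dist_le_of_straight hκ hstraight hr fun k hk => by
          obtain ⟨hk, hball⟩ := Finset.mem_filter.mp hk
          exact ⟨Nat.add_lt_of_lt_sub (Finset.mem_range.mp hk), hball⟩
    _ ≤ 8 * κ * r := by linarith [mul_nonneg hκ hr]

end Frechet
end

section
/- Directed Hausdorff decision via simplification: let ρ* ≥ 0, 0 < ε < 1, μ ≤ ερ*, and define the matrix H over pairs (s, j) where p_s ranges over vertices of P^μ and q_j over Q: H[s,j] = 0 iff some vertex p' of P between p_s (inclusive) and the next simplification vertex (exclusive) satisfies d(p', q_j) ≤ ρ*. If every row and every column of H contains a zero, then the (symmetric, discrete) Hausdorff distance D_H(P, Q) ≤ (1+ε)ρ*; and if some row or column of H has no zero, then D_H(P, Q) > ρ*. -/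
/-!
Every vertex of `P` lies in the block of some simplification vertex, and two vertices of one
block are within arc length, hence distance, `μ` of each other. So a zero in every column puts
each vertex of `P` within `μ + ρ* ≤ (1 + ε)ρ*` of `Q`, and a zero in every row puts each `q_j`
within `ρ*` of `P`. Conversely, a zero-free row `j` means `q_j` is farther than `ρ*` from every
vertex of `P`, and a zero-free column `s` means that `p_s` itself is farther than `ρ*` from
every `q_j`.
-/

open scoped BigOperators

namespace Frechet

variable {X : Type*}

/-- The cell of the Hausdorff matrix `H` indexed by the `k`-th simplification vertex
and the query vertex `q_j` is zero: some vertex `p'` of `P` between the `k`-th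
simplification vertex (inclusive) and the next one (exclusive) has `d(p', q_j) ≤ ρ`. -/
def BlockZero (d : X → X → ℝ) (P : ℕ → X) (n : ℕ) (Q : ℕ → X) (S : List ℕ)
    (ρ : ℝ) (t j : ℕ) : Prop :=
  ∃ i, S.getD t 0 ≤ i ∧
    i < (if t + 1 < S.length then S.getD (t + 1) 0 else n) ∧
    d (P i) (Q j) ≤ ρ

def InBlock (n : ℕ) (S : List ℕ) (t i : ℕ) : Prop :=
  S.getD t 0 ≤ i ∧ i < if t + 1 < S.length then S.getD (t + 1) 0 else n

theorem blockZero_iff {d : X → X → ℝ} {P Q : ℕ → X} {n : ℕ} {S : List ℕ} {ρ : ℝ} {t j : ℕ} :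
    BlockZero d P n Q S ρ t j ↔ ∃ i, InBlock n S t i ∧ d (P i) (Q j) ≤ ρ := by
  simp only [BlockZero, InBlock, and_assoc]

section DirHaus

variable {d : X → X → ℝ} {P Q : ℕ → X} {n m : ℕ} {r : ℝ}

theorem finite_setOf_exists_lt_eq (f : ℕ → ℝ) (m : ℕ) : {s : ℝ | ∃ j < m, s = f j}.Finite :=
  ((Set.finite_Iio m).image f).subset <| by rintro _ ⟨j, hj, rfl⟩; exact ⟨j, hj, rfl⟩

theorem dirHaus_le (hn : 0 < n) (h : ∀ i < n, ∃ j < m, d (P i) (Q j) ≤ r) :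
    dirHaus d P n Q m ≤ r := by
  refine csSup_le ⟨_, 0, hn, rfl⟩ ?_
  rintro _ ⟨i, hi, rfl⟩
  obtain ⟨j, hj, hij⟩ := h i hi
  exact (csInf_le (finite_setOf_exists_lt_eq _ m).bddBelow ⟨j, hj, rfl⟩).trans hij

theorem lt_dirHaus (hm : 0 < m) {i : ℕ} (hi : i < n) (h : ∀ j < m, r < d (P i) (Q j)) :
    r < dirHaus d P n Q m := by
  obtain ⟨j, hj, hmin⟩ := Set.Nonempty.csInf_mem (s := {s | ∃ j < m, s = d (P i) (Q j)})
    ⟨_, 0, hm, rfl⟩ (finite_setOf_exists_lt_eq _ m)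
  calc r < sInf {s | ∃ j < m, s = d (P i) (Q j)} := hmin ▸ h j hj
    _ ≤ dirHaus d P n Q m := le_csSup (finite_setOf_exists_lt_eq _ n).bddAbove ⟨i, hi, rfl⟩

end DirHaus

section Blocks

variable {n : ℕ} {S : List ℕ}

theorem exists_inBlock_of_getD_zero_le {i : ℕ} (hi : i < n) (hne : S ≠ [])
    (hstart : S.getD 0 0 ≤ i) :
    ∃ t < S.length, InBlock n S t i := by
  induction S with
  | nil => exact absurd rfl hne
  | cons a l ih =>
    by_cases hl : l ≠ [] ∧ l.getD 0 0 ≤ i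
    · obtain ⟨t, ht, hit⟩ := ih hl.1 hl.2
      exact ⟨t + 1, by simpa using ht, by simpa [InBlock] using hit⟩
    · refine ⟨0, by simp, hstart, ?_⟩
      cases l with
      | nil => simpa using hi
      | cons b l => simpa using hl

theorem InBlock.lt (hS : ∀ a ∈ S, a < n) {t i : ℕ} (h : InBlock n S t i) : i < n := by
  obtain ⟨-, hend⟩ := h
  split_ifs at hend with hnext
  · exact hend.trans (hS _ (List.getD_eq_getElem S 0 hnext ▸ List.getElem_mem hnext))
  · exact hend

theorem inBlock_self (hsort : S.Pairwise (· < ·)) (hS : ∀ a ∈ S, a < n) {t : ℕ}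
    (ht : t < S.length) : InBlock n S t (S.getD t 0) := by
  refine ⟨le_rfl, ?_⟩
  rw [List.getD_eq_getElem S 0 ht]
  split_ifs with hnext
  · rw [List.getD_eq_getElem S 0 hnext]
    exact List.pairwise_iff_getElem.mp hsort t (t + 1) ht hnext (Nat.lt_succ_self t)
  · exact hS _ (List.getElem_mem ht)

end Blocks

section Simplification

variable {d : X → X → ℝ} {P : ℕ → X} {n : ℕ} {μ : ℝ} {S : List ℕ}

theorem IsSimplification.ne_nil_s17 (hS : IsSimplification d P n μ S) : S ≠ [] := by
  rintro rfl; simp [IsSimplification] at hS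

theorem IsSimplification.getD_zero_s17 (hS : IsSimplification d P n μ S) : S.getD 0 0 = 0 := by
  obtain ⟨a, l, rfl⟩ := List.exists_cons_of_ne_nil hS.ne_nil_s17
  simpa using hS.1

theorem IsSimplification.forall_mem_lt (hS : IsSimplification d P n μ S) : ∀ a ∈ S, a < n :=
  hS.2.2.2.1

theorem IsSimplification.exists_inBlock (hS : IsSimplification d P n μ S) {i : ℕ} (hi : i < n) :
    ∃ t < S.length, InBlock n S t i :=
  exists_inBlock_of_getD_zero_le hi hS.ne_nil_s17 (hS.getD_zero_s17.le.trans (Nat.zero_le i))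

theorem IsSimplification.arcLen_le_of_inBlock (hS : IsSimplification d P n μ S) (hμ : 0 ≤ μ)
    {t i : ℕ} (ht : t < S.length) (hi : InBlock n S t i) : arcLen d P (S.getD t 0) i ≤ μ := by
  obtain ⟨-, hlast, -, -, hchain⟩ := hS
  obtain ⟨hstart, hend⟩ := hi
  rcases hstart.eq_or_lt with heq | hlt
  · simp [← heq, arcLen, hμ]
  split_ifs at hend with hnext
  · rw [List.getD_eq_getElem S 0 ht, List.getD_eq_getElem S 0 hnext] at *
    exact (hchain.getElem t hnext).1 i hlt hend
  · -- the last block is the single vertex `n - 1`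
    rw [List.getLast?_eq_getElem?, show S.length - 1 = t by omega] at hlast
    rw [List.getD_eq_getElem?_getD, hlast, Option.getD_some] at hlt
    omega

theorem IsSimplification.lt_dirHaus_of_forall_not_blockZero {Q : ℕ → X} {m : ℕ} {ρ : ℝ}
    (hS : IsSimplification d P n μ S) (hm : 0 < m) {t : ℕ}
    (ht : t < S.length) (h : ∀ j < m, ¬ BlockZero d P n Q S ρ t j) :
    ρ < dirHaus d P n Q m := by
  obtain ⟨-, -, hsort, hlt, -⟩ := hS
  have hself := inBlock_self hsort hlt ht
  exact lt_dirHaus hm (hself.lt hlt) fun j hj =>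
    lt_of_not_ge fun hle => h j hj (blockZero_iff.mpr ⟨_, hself, hle⟩)

end Simplification

section Hausdorff

variable [PseudoMetricSpace X] {P Q : ℕ → X} {n m : ℕ} {μ ρ : ℝ} {S : List ℕ}

theorem arcLen_mono {a a' b b' : ℕ} (ha : a' ≤ a) (hb : b ≤ b') :
    arcLen dist P a b ≤ arcLen dist P a' b' :=
  Finset.sum_le_sum_of_subset_of_nonneg (Finset.Ico_subset_Ico ha hb) fun _ _ _ => dist_nonneg

theorem IsSimplification.dist_le_of_inBlock (hS : IsSimplification dist P n μ S) (hμ : 0 ≤ μ)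
    {t i i' : ℕ} (ht : t < S.length) (hi : InBlock n S t i) (hi' : InBlock n S t i') :
    dist (P i) (P i') ≤ μ := by
  wlog h : i ≤ i' generalizing i i'
  · rw [dist_comm]; exact this hi' hi (le_of_not_ge h)
  calc dist (P i) (P i') ≤ arcLen dist P i i' := dist_le_Ico_sum_dist P h
    _ ≤ arcLen dist P (S.getD t 0) i' := arcLen_mono hi.1 le_rfl
    _ ≤ μ := hS.arcLen_le_of_inBlock hμ ht hi'

theorem IsSimplification.dirHaus_le_add_of_forall_exists_blockZero
    (hS : IsSimplification dist P n μ S) (hμ : 0 ≤ μ) (hn : 0 < n)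
    (h : ∀ t < S.length, ∃ j < m, BlockZero dist P n Q S ρ t j) :
    dirHaus dist P n Q m ≤ μ + ρ := by
  refine dirHaus_le hn fun i hi => ?_
  obtain ⟨t, ht, hit⟩ := hS.exists_inBlock hi
  obtain ⟨j, hj, hzero⟩ := h t ht
  obtain ⟨i', hi't, hi'j⟩ := blockZero_iff.mp hzero
  refine ⟨j, hj, ?_⟩
  calc dist (P i) (Q j) ≤ dist (P i) (P i') + dist (P i') (Q j) := dist_triangle _ _ _
    _ ≤ μ + ρ := add_le_add (hS.dist_le_of_inBlock hμ ht hit hi't) hi'j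

theorem dirHaus_swap_le_of_forall_exists_blockZero (hS : ∀ a ∈ S, a < n) (hm : 0 < m)
    (h : ∀ j < m, ∃ t < S.length, BlockZero dist P n Q S ρ t j) :
    dirHaus dist Q m P n ≤ ρ := by
  refine dirHaus_le hm fun j hj => ?_
  obtain ⟨t, ht, hzero⟩ := h j hj
  obtain ⟨i, hit, hij⟩ := blockZero_iff.mp hzero
  exact ⟨i, hit.lt hS, by rwa [dist_comm]⟩

theorem IsSimplification.lt_dirHaus_swap_of_forall_not_blockZero
    (hS : IsSimplification dist P n μ S) (hn : 0 < n) {j : ℕ} (hj : j < m)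
    (h : ∀ t < S.length, ¬ BlockZero dist P n Q S ρ t j) :
    ρ < dirHaus dist Q m P n := by
  refine lt_dirHaus hn hj fun i hi => lt_of_not_ge fun hij => ?_
  obtain ⟨t, ht, hit⟩ := hS.exists_inBlock hi
  exact h t ht (blockZero_iff.mpr ⟨i, hit, by rwa [dist_comm]⟩)

end Hausdorff

theorem hausdorff_decision_general {X : Type*} [MetricSpace X]
    (P : ℕ → X) (n : ℕ) (hn : 0 < n)
    (Q : ℕ → X) (m : ℕ) (hm : 0 < m)
    (ρstar ε μ : ℝ)
    (hμ0 : 0 ≤ μ) (hμ : μ ≤ ε * ρstar)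
    (S : List ℕ) (hS : IsSimplification dist P n μ S) :
    (((∀ j < m, ∃ t < S.length, BlockZero dist P n Q S ρstar t j) ∧
      (∀ t < S.length, ∃ j < m, BlockZero dist P n Q S ρstar t j)) →
        dHaus dist P n Q m ≤ (1 + ε) * ρstar) ∧
    (((∃ j < m, ∀ t < S.length, ¬ BlockZero dist P n Q S ρstar t j) ∨
      (∃ t < S.length, ∀ j < m, ¬ BlockZero dist P n Q S ρstar t j)) →
        ρstar < dHaus dist P n Q m) := by
  constructor
  · rintro ⟨hrow, hcol⟩
    refine max_le ?_ ?_
    · calc dirHaus dist P n Q m ≤ μ + ρstar :=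
            hS.dirHaus_le_add_of_forall_exists_blockZero hμ0 hn hcol
        _ ≤ (1 + ε) * ρstar := by linarith
    · calc dirHaus dist Q m P n ≤ ρstar :=
            dirHaus_swap_le_of_forall_exists_blockZero hS.forall_mem_lt hm hrow
        _ ≤ (1 + ε) * ρstar := by linarith
  · rintro (⟨j, hj, hrow⟩ | ⟨t, ht, hcol⟩)
    · exact (hS.lt_dirHaus_swap_of_forall_not_blockZero hn hj hrow).trans_le (le_max_right _ _)
    · exact (hS.lt_dirHaus_of_forall_not_blockZero hm ht hcol).trans_le (le_max_left _ _)

/-- directed Hausdorff decision via simplification. If every row and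
every column of the matrix `H` contains a zero then `D_H(P,Q) ≤ (1+ε)ρ*`, and if
some row or some column of `H` has no zero then `D_H(P,Q) > ρ*`. -/
theorem hausdorff_decision {X : Type*} [MetricSpace X]
    (P : ℕ → X) (n : ℕ) (hn : 0 < n)
    (Q : ℕ → X) (m : ℕ) (hm : 0 < m)
    (ρstar ε μ : ℝ) (hρ : 0 ≤ ρstar) (hε0 : 0 < ε) (hε1 : ε < 1)
    (hμ0 : 0 ≤ μ) (hμ : μ ≤ ε * ρstar)
    (S : List ℕ) (hS : IsSimplification dist P n μ S) :
    (((∀ j < m, ∃ t < S.length, BlockZero dist P n Q S ρstar t j) ∧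
      (∀ t < S.length, ∃ j < m, BlockZero dist P n Q S ρstar t j)) →
        dHaus dist P n Q m ≤ (1 + ε) * ρstar) ∧
    (((∃ j < m, ∀ t < S.length, ¬ BlockZero dist P n Q S ρstar t j) ∨
      (∃ t < S.length, ∀ j < m, ¬ BlockZero dist P n Q S ρstar t j)) →
        ρstar < dHaus dist P n Q m) :=
  hausdorff_decision_general P n hn Q m hm ρstar ε μ hμ0 hμ S hS

end Frechet
end
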